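/- arXiv:1811.01779 — 2 statements merged into one kernel-verified Lean document; each statement's English description precedes it below -/
import Mathlib

section
/- Let α ∈ (0,1), ε ∈ (0,1], and let V : ℝ → ℝ be C³ with (1+|z|)^α |V''(z)| ≤ M for all z. Define D_ε(V')(y₁,y₂,z) = V'(z/2) − ½ V'(z/2 + εy₁) − ½ V'(z/2 + εy₂). Then for all z, y₁, y₂: (1+|z|)^α |D_ε(V')(y₁,y₂,z)| ≤ ε 2^α M (|y₁| + |y₂| + ε^α |y₁|^{1+α} + ε^α |y₂|^{1+α}). -/
/-!
The difference is the average of `V'(z/2 + εyᵢ) - V'(z/2)`, each bounded by the mean value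
theorem. On the segment the weight at `a = z/2` is compared with the weight at `x` by Peetre's
inequality `(1 + |a|)^α ≤ (1 + |x|)^α (1 + |a - x|^α)`, which is subadditivity of `t ↦ t^α`
for `α ≤ 1`; finally `1 + |z| ≤ 2 (1 + |z/2|)` produces the factor `2^α`.
-/

open Real

lemma one_add_abs_rpow_le_mul_one_add_rpow {α a x r : ℝ} (hα0 : 0 ≤ α) (hα1 : α ≤ 1)
    (hax : |a - x| ≤ r) : (1 + |a|) ^ α ≤ (1 + |x|) ^ α * (1 + r ^ α) := by
  have hr : 0 ≤ r := (abs_nonneg _).trans hax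
  have hx : 1 ≤ (1 + |x|) ^ α := one_le_rpow (by linarith [abs_nonneg x]) hα0
  have hdist : 1 + |a| ≤ (1 + |x|) + r := by linarith [abs_sub_abs_le_abs_sub a x]
  calc (1 + |a|) ^ α ≤ ((1 + |x|) + r) ^ α := by gcongr
    _ ≤ (1 + |x|) ^ α + r ^ α := rpow_add_le_add_rpow (by positivity) hr hα0 hα1
    _ ≤ (1 + |x|) ^ α * (1 + r ^ α) := by nlinarith [rpow_nonneg hr α]

lemma one_add_abs_rpow_le_two_rpow_mul {α : ℝ} (hα : 0 ≤ α) (z : ℝ) :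
    (1 + |z|) ^ α ≤ 2 ^ α * (1 + |z / 2|) ^ α := by
  rw [← mul_rpow zero_le_two (by positivity)]
  gcongr
  rw [abs_div, abs_two]
  linarith

lemma one_add_abs_rpow_mul_abs_sub_le {α M : ℝ} {f f' : ℝ → ℝ} (hα0 : 0 ≤ α) (hα1 : α ≤ 1)
    (hf : ∀ x, HasDerivAt f (f' x) x) (hM : ∀ x, (1 + |x|) ^ α * |f' x| ≤ M) (a h : ℝ) :
    (1 + |a|) ^ α * |f (a + h) - f a| ≤ M * |h| * (1 + |h| ^ α) := by
  have hwa : 0 < (1 + |a|) ^ α := by positivity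
  have bound : ∀ x ∈ Metric.closedBall a |h|,
      ‖f' x‖ ≤ M * (1 + |h| ^ α) / (1 + |a|) ^ α := by
    intro x hx
    rw [Metric.mem_closedBall, dist_comm, Real.dist_eq] at hx
    rw [Real.norm_eq_abs, le_div_iff₀ hwa]
    calc |f' x| * (1 + |a|) ^ α ≤ |f' x| * ((1 + |x|) ^ α * (1 + |h| ^ α)) := by
          gcongr; exact one_add_abs_rpow_le_mul_one_add_rpow hα0 hα1 hx
      _ = (1 + |x|) ^ α * |f' x| * (1 + |h| ^ α) := by ring
      _ ≤ M * (1 + |h| ^ α) := by gcongr; exact hM x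
  have hmem : a + h ∈ Metric.closedBall a |h| := by simp
  have mvt := (convex_closedBall a |h|).norm_image_sub_le_of_norm_hasDerivWithin_le
    (fun x _ => (hf x).hasDerivWithinAt) bound (Metric.mem_closedBall_self (abs_nonneg h)) hmem
  rw [Real.norm_eq_abs, Real.norm_eq_abs, add_sub_cancel_left] at mvt
  calc (1 + |a|) ^ α * |f (a + h) - f a|
      ≤ (1 + |a|) ^ α * (M * (1 + |h| ^ α) / (1 + |a|) ^ α * |h|) := by gcongr
    _ = M * |h| * (1 + |h| ^ α) := by field_simp

lemma hasDerivAt_deriv_iteratedDeriv_two {V : ℝ → ℝ} (hV : ContDiff ℝ 2 V) (x : ℝ) :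
    HasDerivAt (deriv V) (iteratedDeriv 2 V x) x := by
  rw [iteratedDeriv_succ, iteratedDeriv_one]
  exact ((hV.iterate_deriv' 1 1).differentiable one_ne_zero x).hasDerivAt

lemma abs_mul_one_add_abs_mul_rpow {ε α : ℝ} (hε : 0 ≤ ε) (hα : 0 ≤ α) (y : ℝ) :
    |ε * y| * (1 + |ε * y| ^ α) = ε * (|y| + ε ^ α * |y| ^ (1 + α)) := by
  rw [abs_mul, abs_of_nonneg hε, mul_rpow hε (abs_nonneg y),
    rpow_add' (abs_nonneg y) (by positivity), rpow_one]
  ring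

lemma abs_sub_half_mul_sub_half_mul_le (u v w : ℝ) :
    |u - 1 / 2 * v - 1 / 2 * w| ≤ 1 / 2 * |v - u| + 1 / 2 * |w - u| := by
  have h : u - 1 / 2 * v - 1 / 2 * w = -(1 / 2 * ((v - u) + (w - u))) := by ring
  rw [h, abs_neg, abs_mul, abs_of_pos one_half_pos]
  linarith [abs_add_le (v - u) (w - u)]

theorem weighted_estimate_first_derivative_general
    (α ε : ℝ) (hα0 : 0 < α) (hα1 : α < 1) (hε0 : 0 < ε)
    (V : ℝ → ℝ) (M : ℝ) (hV : ContDiff ℝ 3 V)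
    (hM : ∀ z : ℝ, (1 + |z|) ^ α * |iteratedDeriv 2 V z| ≤ M) :
    ∀ z y₁ y₂ : ℝ,
      (1 + |z|) ^ α *
        |deriv V (z / 2) - (1 / 2) * deriv V (z / 2 + ε * y₁)
          - (1 / 2) * deriv V (z / 2 + ε * y₂)|
      ≤ ε * (2 : ℝ) ^ α * M *
          (|y₁| + |y₂| + ε ^ α * |y₁| ^ (1 + α) + ε ^ α * |y₂| ^ (1 + α)) := by
  intro z y₁ y₂
  have hM0 : 0 ≤ M := (by positivity : (0 : ℝ) ≤ _).trans (hM 0)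
  set g := deriv V
  set a := z / 2
  have hdiff (y : ℝ) : (1 + |a|) ^ α * |g (a + ε * y) - g a|
      ≤ M * ε * (|y| + ε ^ α * |y| ^ (1 + α)) := by
    have := one_add_abs_rpow_mul_abs_sub_le hα0.le hα1.le
      (hasDerivAt_deriv_iteratedDeriv_two (hV.of_le (by norm_num))) hM a (ε * y)
    rwa [mul_assoc, abs_mul_one_add_abs_mul_rpow hε0.le hα0.le y, ← mul_assoc] at this
  have hrhs : 0 ≤ 2 ^ α * (M * ε * (|y₁| + ε ^ α * |y₁| ^ (1 + α))
      + M * ε * (|y₂| + ε ^ α * |y₂| ^ (1 + α))) := by positivity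
  calc _ ≤ 2 ^ α * (1 + |a|) ^ α * (1 / 2 * |g (a + ε * y₁) - g a|
        + 1 / 2 * |g (a + ε * y₂) - g a|) :=
        mul_le_mul (one_add_abs_rpow_le_two_rpow_mul hα0.le z)
          (abs_sub_half_mul_sub_half_mul_le _ _ _) (abs_nonneg _) (by positivity)
    _ = 2 ^ α / 2 * ((1 + |a|) ^ α * |g (a + ε * y₁) - g a|
        + (1 + |a|) ^ α * |g (a + ε * y₂) - g a|) := by ring
    _ ≤ 2 ^ α / 2 * (M * ε * (|y₁| + ε ^ α * |y₁| ^ (1 + α))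
        + M * ε * (|y₂| + ε ^ α * |y₂| ^ (1 + α))) :=
        mul_le_mul_of_nonneg_left (add_le_add (hdiff y₁) (hdiff y₂)) (by positivity)
    _ ≤ _ := by linarith

theorem weighted_estimate_first_derivative
    (α ε : ℝ) (hα0 : 0 < α) (hα1 : α < 1) (hε0 : 0 < ε) (hε1 : ε ≤ 1)
    (V : ℝ → ℝ) (M : ℝ) (hV : ContDiff ℝ 3 V)
    (hM : ∀ z : ℝ, (1 + |z|) ^ α * |iteratedDeriv 2 V z| ≤ M) :
    ∀ z y₁ y₂ : ℝ,
      (1 + |z|) ^ α *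
        |deriv V (z / 2) - (1 / 2) * deriv V (z / 2 + ε * y₁)
          - (1 / 2) * deriv V (z / 2 + ε * y₂)|
      ≤ ε * (2 : ℝ) ^ α * M *
          (|y₁| + |y₂| + ε ^ α * |y₁| ^ (1 + α) + ε ^ α * |y₂| ^ (1 + α)) :=
  weighted_estimate_first_derivative_general α ε hα0 hα1 hε0 V M hV hM
end

section
/- Let α ∈ (0,1), ε ∈ (0,1], and let V : ℝ → ℝ be C³ with (1+|z|)^α |V'''(z)| ≤ M for all z. Then for all z, y₁, y₂: (1+|z|)^α · |(1/4)·(V'''(z/2) − (1/2)V'''(z/2 + εy₁) − (1/2)V'''(z/2 + εy₂))| ≤ 2^{α−1} M (1 + (ε^α/4)(|y₁|^α + |y₂|^α)). -/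
open Real

private lemma rpow_subadd {α : ℝ} (hα0 : 0 < α) (hα1 : α < 1)
    {a b : ℝ} (ha : 0 ≤ a) (hb : 0 ≤ b) : (a + b) ^ α ≤ a ^ α + b ^ α := by
  have h := NNReal.rpow_add_le_add_rpow a.toNNReal b.toNNReal hα0.le hα1.le
  have := NNReal.coe_le_coe.mpr h
  push_cast [NNReal.coe_rpow, Real.coe_toNNReal _ ha, Real.coe_toNNReal _ hb] at this
  exact this

theorem weighted_estimate_third_derivative
    (α ε : ℝ) (hα0 : 0 < α) (hα1 : α < 1) (hε0 : 0 < ε) (hε1 : ε ≤ 1)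
    (V : ℝ → ℝ) (M : ℝ) (hV : ContDiff ℝ 3 V)
    (hM : ∀ z : ℝ, (1 + |z|) ^ α * |iteratedDeriv 3 V z| ≤ M) :
    ∀ z y₁ y₂ : ℝ,
      (1 + |z|) ^ α *
        |(1 / 4) * (iteratedDeriv 3 V (z / 2)
          - (1 / 2) * iteratedDeriv 3 V (z / 2 + ε * y₁)
          - (1 / 2) * iteratedDeriv 3 V (z / 2 + ε * y₂))|
      ≤ (2 : ℝ) ^ (α - 1) * M * (1 + (ε ^ α / 4) * (|y₁| ^ α + |y₂| ^ α)) := by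
  intro z y₁ y₂
  set f := iteratedDeriv 3 V with hf
  -- basic facts
  have hMnn : 0 ≤ M := le_trans (by positivity) (hM 0)
  have hone : ∀ x : ℝ, (1:ℝ) ≤ (1 + |x|) ^ α := fun x =>
    Real.one_le_rpow (by linarith [abs_nonneg x]) hα0.le
  have hfb : ∀ x : ℝ, |f x| ≤ M := fun x =>
    le_trans (le_mul_of_one_le_left (abs_nonneg _) (hone x)) (hM x)
  -- key estimate: (1+|a|)^α |f (a+b)| ≤ M (1 + |b|^α)
  have key : ∀ a b : ℝ, (1 + |a|) ^ α * |f (a + b)| ≤ M * (1 + |b| ^ α) := by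
    intro a b
    have h1 : (1 + |a|) ^ α ≤ (1 + |a + b|) ^ α + |b| ^ α := by
      have habs : |a| ≤ |a + b| + |b| := by
        calc |a| = |(a + b) + (-b)| := by ring_nf
        _ ≤ |a + b| + |(-b)| := abs_add_le _ _
        _ = |a + b| + |b| := by rw [abs_neg]
      calc (1 + |a|) ^ α ≤ ((1 + |a + b|) + |b|) ^ α := by
            apply Real.rpow_le_rpow (by positivity) (by linarith) hα0.le
        _ ≤ (1 + |a + b|) ^ α + |b| ^ α :=
            rpow_subadd hα0 hα1 (by positivity) (abs_nonneg _)
    calc (1 + |a|) ^ α * |f (a + b)|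
        ≤ ((1 + |a + b|) ^ α + |b| ^ α) * |f (a + b)| := by
          apply mul_le_mul_of_nonneg_right h1 (abs_nonneg _)
      _ = (1 + |a + b|) ^ α * |f (a + b)| + |b| ^ α * |f (a + b)| := by ring
      _ ≤ M + |b| ^ α * M :=
          add_le_add (hM _)
            (mul_le_mul_of_nonneg_left (hfb _) (Real.rpow_nonneg (abs_nonneg _) _))
      _ = M * (1 + |b| ^ α) := by ring
  -- split off factor 2^α
  have hsplit : (1 + |z|) ^ α ≤ 2 ^ α * (1 + |z / 2|) ^ α := by
    rw [← Real.mul_rpow (by norm_num) (by positivity)]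
    apply Real.rpow_le_rpow (by positivity) ?_ hα0.le
    have : |z| = 2 * |z / 2| := by rw [abs_div]; simp [abs_of_nonneg]; ring
    linarith [abs_nonneg (z / 2)]
  have h0 : (1 + |z / 2|) ^ α * |f (z / 2)| ≤ M := hM _
  have h1 := key (z / 2) (ε * y₁)
  have h2 := key (z / 2) (ε * y₂)
  have htri : |(1 / 4) * (f (z / 2) - (1 / 2) * f (z / 2 + ε * y₁)
      - (1 / 2) * f (z / 2 + ε * y₂))|
      ≤ (1 / 4) * |f (z / 2)| + (1 / 8) * |f (z / 2 + ε * y₁)|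
        + (1 / 8) * |f (z / 2 + ε * y₂)| := by
    have ha := abs_sub (f (z / 2) - (1 / 2) * f (z / 2 + ε * y₁)) ((1 / 2) * f (z / 2 + ε * y₂))
    have hb := abs_sub (f (z / 2)) ((1 / 2) * f (z / 2 + ε * y₁))
    rw [abs_mul] at *
    rw [show |(1:ℝ)/4| = 1/4 by norm_num] 
    rw [show |(1:ℝ)/2| = 1/2 by norm_num] at ha hb
    nlinarith [abs_nonneg (f (z/2))]
  have hzα : (0:ℝ) ≤ (1 + |z|) ^ α := by positivity
  have hεy : ∀ y : ℝ, |ε * y| ^ α = ε ^ α * |y| ^ α := by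
    intro y
    rw [abs_mul, abs_of_pos hε0, Real.mul_rpow hε0.le (abs_nonneg _)]
  have step : (1 + |z|) ^ α *
        |(1 / 4) * (f (z / 2) - (1 / 2) * f (z / 2 + ε * y₁) - (1 / 2) * f (z / 2 + ε * y₂))|
      ≤ 2 ^ α * ((1 / 4) * M + (1 / 8) * (M * (1 + |ε * y₁| ^ α))
          + (1 / 8) * (M * (1 + |ε * y₂| ^ α))) := by
    calc (1 + |z|) ^ α * |(1 / 4) * (f (z / 2) - (1 / 2) * f (z / 2 + ε * y₁) - (1 / 2) * f (z / 2 + ε * y₂))|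
        ≤ (2 ^ α * (1 + |z / 2|) ^ α) *
            ((1 / 4) * |f (z / 2)| + (1 / 8) * |f (z / 2 + ε * y₁)| + (1 / 8) * |f (z / 2 + ε * y₂)|) := by
          apply mul_le_mul hsplit htri (abs_nonneg _) (by positivity)
      _ = 2 ^ α * ((1 / 4) * ((1 + |z / 2|) ^ α * |f (z / 2)|)
            + (1 / 8) * ((1 + |z / 2|) ^ α * |f (z / 2 + ε * y₁)|)
            + (1 / 8) * ((1 + |z / 2|) ^ α * |f (z / 2 + ε * y₂)|)) := by ring
      _ ≤ 2 ^ α * ((1 / 4) * M + (1 / 8) * (M * (1 + |ε * y₁| ^ α))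
            + (1 / 8) * (M * (1 + |ε * y₂| ^ α))) := by
          have h2pos : (0:ℝ) ≤ (2:ℝ) ^ α := by positivity
          apply mul_le_mul_of_nonneg_left ?_ h2pos
          have := add_le_add (add_le_add (mul_le_mul_of_nonneg_left h0 (by norm_num : (0:ℝ) ≤ 1/4))
            (mul_le_mul_of_nonneg_left h1 (by norm_num : (0:ℝ) ≤ 1/8)))
            (mul_le_mul_of_nonneg_left h2 (by norm_num : (0:ℝ) ≤ 1/8))
          linarith
  refine step.trans (le_of_eq ?_)
  rw [hεy, hεy, Real.rpow_sub (by norm_num : (0:ℝ) < 2)]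
  have : (2:ℝ) ^ (1:ℝ) = 2 := Real.rpow_one 2
  field_simp
  ring
end
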